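/- Let n ≥ 3 and let A be a primitive (0,1) companion matrix of order n with zero trace. Let V_2 = {i : a_{n,i} = 1} and V_1 = {i : a_{n,i} = 0}. If j ∈ V_1, set p = j - max([1,j] ∩ V_2) (which satisfies 1 ≤ p ≤ j-1 since 1 ∈ V_2). Then exp(A:1,j) = exp(A:1,j-p) + p. -/

import Mathlib

open Matrix BigOperators

/-- A nonnegative square matrix is primitive if some positive power has all entries positive. -/
def IsPrimitive {n : ℕ} (A : Matrix (Fin n) (Fin n) ℝ) : Prop :=
  ∃ m : ℕ, 0 < m ∧ ∀ i j, 0 < (A ^ m) i j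

/-- The exponent of a primitive matrix: the least positive `m` with `A ^ m > 0`. -/
noncomputable def matExp {n : ℕ} (A : Matrix (Fin n) (Fin n) ℝ) : ℕ :=
  sInf {m : ℕ | 0 < m ∧ ∀ i j, 0 < (A ^ m) i j}

/-- `(0,1)` companion matrix: superdiagonal ones on the first `n-1` rows,
arbitrary `(0,1)` last row, all other entries zero. -/
def IsCompanion {n : ℕ} (A : Matrix (Fin n) (Fin n) ℝ) : Prop :=
  (∀ i j, A i j = 0 ∨ A i j = 1) ∧
  (∀ i j : Fin n, (i : ℕ) + 1 < n → (A i j = 1 ↔ (j : ℕ) = (i : ℕ) + 1))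

/-- `exp(A:i,j)`: least positive `k` such that `(A^l) i j > 0` for all `l ≥ k`. -/
noncomputable def expIJ {n : ℕ} (A : Matrix (Fin n) (Fin n) ℝ) (i j : Fin n) : ℕ :=
  sInf {k : ℕ | 0 < k ∧ ∀ l, k ≤ l → 0 < (A ^ l) i j}

/-- `exp(A:i)`: least positive `p` such that every entry of row `i` of `A ^ p` is positive. -/
noncomputable def expRow {n : ℕ} (A : Matrix (Fin n) (Fin n) ℝ) (i : Fin n) : ℕ :=
  sInf {p : ℕ | 0 < p ∧ ∀ j, 0 < (A ^ p) i j}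

/-- The digraph of `A` has an elementary cycle of length `k`. -/
def HasElemCycle {n : ℕ} (A : Matrix (Fin n) (Fin n) ℝ) (k : ℕ) : Prop :=
  0 < k ∧ ∃ c : ℕ → Fin n, c k = c 0 ∧
    (∀ i j, i < k → j < k → c i = c j → i = j) ∧
    ∀ i < k, A (c i) (c (i + 1)) = 1

/-- `m(U)`: the maximal length of a run of consecutive integers contained in `U`. -/
noncomputable def runMax (U : Set ℕ) : ℕ :=
  sSup {k : ℕ | ∃ a : ℕ, ∀ t < k, a + t ∈ U}

/-- The Frobenius number of a set `L`: the least `N` such that every `m ≥ N` is a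
nonnegative integer combination of elements of `L`. -/
noncomputable def frobNum (L : Set ℕ) : ℕ :=
  sInf {N : ℕ | ∀ m, N ≤ m → m ∈ AddSubmonoid.closure L}

/-- Irreducibility: for all `i j` there is a walk of some positive length from `i` to `j`. -/
def IsIrreducibleMat {n : ℕ} (A : Matrix (Fin n) (Fin n) ℝ) : Prop :=
  ∀ i j, ∃ k : ℕ, 0 < k ∧ 0 < (A ^ k) i j

/-!
In the digraph of a companion matrix the only edge into a vertex `r > 1` that is not entered
from the last vertex comes from `r - 1`. Hence if no vertex of `(q, j]` is entered from the last
vertex, every walk from `1` to `j` ends with the path `q → q + 1 → ⋯ → j`, so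
`(A ^ (l + (j - q))) 1 j = (A ^ l) 1 q` for all `l`. The thresholds of eventual positivity then
differ by exactly `j - q`: both are finite by primitivity, and the one for `j` exceeds `j - q`
because `(A ^ 0) 1 q` and `(A ^ 1) 1 q` cannot both be positive, as `a₁₁ = 0`.
-/

theorem Nat.sInf_eventually_add {P Q : ℕ → Prop} (p : ℕ) (hPQ : ∀ l, P (l + p) ↔ Q l)
    (hQ : ¬ ∀ l, Q l) (hQev : ∃ m, ∀ l, m ≤ l → Q l) :
    sInf {k | 0 < k ∧ ∀ l, k ≤ l → P l} = sInf {k | 0 < k ∧ ∀ l, k ≤ l → Q l} + p := by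
  obtain ⟨m, hm⟩ := hQev
  have hpos : 0 < sInf {k | 0 < k ∧ ∀ l, k ≤ l → Q l} :=
    (Nat.sInf_mem (s := {k | 0 < k ∧ ∀ l, k ≤ l → Q l})
      ⟨m + 1, m.succ_pos, fun l hl => hm l (by omega)⟩).1
  rw [Nat.sInf_add' hpos]
  congr 1
  ext k
  simp only [Set.mem_ofPred_eq]
  constructor
  · rintro ⟨hk, hPk⟩
    have hpk : p < k := by
      by_contra! hkp
      exact hQ fun l => (hPQ l).1 (hPk _ (by omega))
    exact ⟨by omega, fun l hl => (hPQ l).1 (hPk _ (by omega))⟩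
  · rintro ⟨hk, hQk⟩
    refine ⟨by omega, fun l hl => ?_⟩
    rw [← Nat.sub_add_cancel (show p ≤ l by omega)]
    exact (hPQ _).2 (hQk _ (by omega))

section NonnegPow

variable {ι R : Type*} [Fintype ι] [DecidableEq ι] [Ring R] [LinearOrder R]
  [IsStrictOrderedRing R] {A : Matrix ι ι R}

theorem Matrix.exists_apply_pos_of_pow_apply_pos (hA : ∀ i j, 0 ≤ A i j) {m : ℕ} (hm : 0 < m)
    {i j : ι} (h : 0 < (A ^ m) i j) : ∃ c, 0 < A c j := by
  obtain ⟨m, rfl⟩ := Nat.exists_eq_add_one_of_ne_zero hm.ne'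
  rw [pow_succ, mul_apply, Finset.sum_pos_iff_of_nonneg
    fun c _ => mul_nonneg (pow_apply_nonneg hA m i c) (hA c j)] at h
  obtain ⟨c, -, hc⟩ := h
  exact ⟨c, pos_of_mul_pos_right hc (pow_apply_nonneg hA m i c)⟩

theorem Matrix.pow_succ_apply_pos (hA : ∀ i j, 0 ≤ A i j) (hcol : ∀ j, ∃ c, 0 < A c j)
    {l : ℕ} (hl : ∀ i j, 0 < (A ^ l) i j) (i j : ι) : 0 < (A ^ (l + 1)) i j := by
  obtain ⟨c, hc⟩ := hcol j
  rw [pow_succ, mul_apply]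
  exact Finset.sum_pos' (fun x _ => mul_nonneg (pow_apply_nonneg hA l i x) (hA x j))
    ⟨c, Finset.mem_univ c, mul_pos (hl i c) hc⟩

theorem Matrix.pow_apply_pos_of_le (hA : ∀ i j, 0 ≤ A i j) {m : ℕ} (hm : 0 < m)
    (hpos : ∀ i j, 0 < (A ^ m) i j) {l : ℕ} (hl : m ≤ l) (i j : ι) : 0 < (A ^ l) i j := by
  have hcol : ∀ j, ∃ c, 0 < A c j := fun j =>
    exists_apply_pos_of_pow_apply_pos hA hm (hpos i j)
  induction l, hl using Nat.le_induction generalizing i j with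
  | base => exact hpos i j
  | succ l _ ih => exact pow_succ_apply_pos hA hcol ih i j

end NonnegPow

namespace IsCompanion

variable {n : ℕ} {A : Matrix (Fin n) (Fin n) ℝ}

theorem nonneg (hA : IsCompanion A) (i j : Fin n) : 0 ≤ A i j := by
  rcases hA.1 i j with h | h <;> simp [h]

theorem apply_eq_zero (hA : IsCompanion A) {c r : Fin n} (hc : (c : ℕ) + 1 < n)
    (hcr : (r : ℕ) ≠ c + 1) : A c r = 0 :=
  (hA.1 c r).resolve_right fun h => hcr ((hA.2 c r hc).1 h)

theorem apply_pred (hA : IsCompanion A) {r : Fin n} (hr : 0 < (r : ℕ)) :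
    A ⟨r - 1, by omega⟩ r = 1 :=
  (hA.2 _ r (by simp only; omega)).2 (by simp only; omega)

theorem mul_apply_of_last_eq_zero (hA : IsCompanion A) (M : Matrix (Fin n) (Fin n) ℝ)
    {r : Fin n} (hr : 0 < (r : ℕ)) (hlast : A ⟨n - 1, by omega⟩ r = 0) (i : Fin n) :
    (M * A) i r = M i ⟨r - 1, by omega⟩ := by
  rw [mul_apply, Finset.sum_eq_single_of_mem _ (Finset.mem_univ _), hA.apply_pred hr, mul_one]
  intro c _ hc
  have hcr : A c r = 0 := by
    by_cases hcn : (c : ℕ) + 1 < n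
    · exact hA.apply_eq_zero hcn fun h => hc (Fin.ext (by simp only; omega))
    · rwa [show c = ⟨n - 1, by omega⟩ from Fin.ext (by simp only; omega)]
  rw [hcr, mul_zero]

theorem pow_add_apply_of_last_eq_zero (hA : IsCompanion A) {q j : Fin n} (hqj : q ≤ j)
    (hlast : ∀ s : Fin n, q < s → s ≤ j → A ⟨n - 1, by omega⟩ s = 0) (i : Fin n) (l : ℕ) :
    (A ^ (l + ((j : ℕ) - q))) i j = (A ^ l) i q := by
  induction hd : (j : ℕ) - q generalizing q l with
  | zero => rw [show q = j from le_antisymm hqj (Fin.le_def.2 (by omega)), add_zero]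
  | succ d ih =>
    have hq' : (q : ℕ) + 1 < n := by omega
    let q' : Fin n := ⟨q + 1, hq'⟩
    have hqq' : q < q' := Fin.lt_def.2 (by simp [q'])
    have hq'j : q' ≤ j := Fin.le_def.2 (by simp only [q']; omega)
    rw [show l + (d + 1) = l + 1 + d by omega,
      ih hq'j (fun s hs hsj => hlast s (hqq'.trans hs) hsj) (l + 1) (by simp only [q']; omega),
      pow_succ, hA.mul_apply_of_last_eq_zero _ (by simp [q']) (hlast q' hqq' hq'j)]
    rfl

theorem not_forall_pow_apply_pos (hA : IsCompanion A) {i : Fin n} (hi : (i : ℕ) + 1 < n)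
    (q : Fin n) : ¬ ∀ l, 0 < (A ^ l) i q := by
  intro h
  have hiq : i = q := by
    by_contra hne
    simpa [one_apply_ne hne] using h 0
  have hA1 := h 1
  rw [pow_one, ← hiq, hA.apply_eq_zero hi (by omega)] at hA1
  exact hA1.false

end IsCompanion

theorem stmt10 {n : ℕ} (hn : 3 ≤ n) (A : Matrix (Fin n) (Fin n) ℝ)
    (hA : IsCompanion A) (hP : _root_.IsPrimitive A)
    (j q : Fin n)
    (hqj : q < j)
    (hqmax : ∀ r : Fin n, r ≤ j → A ⟨n - 1, by omega⟩ r = 1 → r ≤ q) :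
    expIJ A ⟨0, by omega⟩ j = expIJ A ⟨0, by omega⟩ q + ((j : ℕ) - (q : ℕ)) := by
  have hlast : ∀ s : Fin n, q < s → s ≤ j → A ⟨n - 1, by omega⟩ s = 0 := fun s hqs hsj =>
    (hA.1 _ s).resolve_right fun h => (hqmax s hsj h).not_gt hqs
  obtain ⟨m, hm, hpos⟩ := hP
  exact Nat.sInf_eventually_add _
    (fun l => by rw [hA.pow_add_apply_of_last_eq_zero hqj.le hlast])
    (hA.not_forall_pow_apply_pos (by simp only; omega) q)
    ⟨m, fun l hl => pow_apply_pos_of_le hA.nonneg hm hpos hl _ _⟩
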